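/- arXiv:2308.00286 — 3 statements merged into one kernel-verified Lean document; each statement's English description precedes it below -/
import Mathlib

section
/- Let V be a finite-dimensional vector space over a field, let M and M' be subspaces of V of the same dimension d such that dim(M ∩ M') = d − 1, and let F be a subspace of V with dim F = k, where d = n − k and n = dim V. If F ∩ M ≠ 0 and F ∩ M' ≠ 0, then either F ∩ (M ∩ M') ≠ 0 or dim(F ∩ (M + M')) ≥ 2. -/
theorem schubert_divisor_self_intersection
    {K V : Type*} [Field K] [AddCommGroup V] [Module K V] [FiniteDimensional K V]
    (n k d : ℕ) (hn : Module.finrank K V = n) (hd : d = n - k) (hk : k < n)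
    (M M' F : Submodule K V)
    (hM : Module.finrank K M = d) (hM' : Module.finrank K M' = d)
    (hMM' : Module.finrank K ↥(M ⊓ M') = d - 1)
    (hF : Module.finrank K F = k)
    (h1 : F ⊓ M ≠ ⊥) (h2 : F ⊓ M' ≠ ⊥) :
    F ⊓ (M ⊓ M') ≠ ⊥ ∨ 2 ≤ Module.finrank K ↥(F ⊓ (M ⊔ M')) := by
  by_cases h : F ⊓ (M ⊓ M') = ⊥
  · right
    obtain ⟨x, hx, hx0⟩ := Submodule.ne_bot_iff _ |>.mp h1
    obtain ⟨y, hy, hy0⟩ := Submodule.ne_bot_iff _ |>.mp h2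
    obtain ⟨hxF, hxM⟩ := Submodule.mem_inf.mp hx
    obtain ⟨hyF, hyM'⟩ := Submodule.mem_inf.mp hy
    have hxW : x ∈ F ⊓ (M ⊔ M') :=
      Submodule.mem_inf.mpr ⟨hxF, Submodule.mem_sup_left hxM⟩
    have hyW : y ∈ F ⊓ (M ⊔ M') :=
      Submodule.mem_inf.mpr ⟨hyF, Submodule.mem_sup_right hyM'⟩
    have hli : LinearIndependent K ![x, y] := by
      rw [LinearIndependent.pair_iff]
      intro s t hst
      by_cases ht : t = 0
      · subst ht
        simp only [smul_zero, add_zero, zero_smul] at hst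
        rcases smul_eq_zero.mp hst with hs | hx'
        · exact ⟨hs, rfl⟩
        · exact absurd hx' hx0
      · exfalso
        have hyx : y = (t⁻¹ * -s) • x := by
          have h' : t • y = (-s) • x := by
            rw [neg_smul]
            exact eq_neg_of_add_eq_zero_right hst
          have := congrArg (fun v => t⁻¹ • v) h'
          simp only [smul_smul, inv_mul_cancel₀ ht, one_smul] at this
          exact this
        have hyM : y ∈ M := hyx ▸ Submodule.smul_mem _ _ hxM
        have : y ∈ F ⊓ (M ⊓ M') :=
          Submodule.mem_inf.mpr ⟨hyF, Submodule.mem_inf.mpr ⟨hyM, hyM'⟩⟩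
        rw [h] at this
        exact hy0 this
    have hspan : Submodule.span K (Set.range ![x, y]) ≤ F ⊓ (M ⊔ M') := by
      rw [Submodule.span_le]
      rintro v ⟨i, rfl⟩
      fin_cases i
      · exact hxW
      · exact hyW
    calc (2 : ℕ) = Module.finrank K (Submodule.span K (Set.range ![x, y])) := by
          rw [finrank_span_eq_card hli]; simp
      _ ≤ Module.finrank K ↥(F ⊓ (M ⊔ M')) := Submodule.finrank_mono hspan
  · left; exact h
end

section
/- Let V be an n-dimensional vector space over a field with basis e_1,...,e_n, and let M_i denote the span of e_1,...,e_i. Let F ⊆ E be subspaces of V with dim F = k and dim E = k + 1. If F ∩ M_{n−k} ≠ 0 and E ∩ M_{n−k−1} ≠ 0, then F ∩ M_{n−k−1} ≠ 0 or dim(E ∩ M_{n−k}) ≥ 2. -/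
/-! Write `M₁ ≤ M₂` for the two coordinate subspaces and `W := E ⊓ M₂`. If `F ⊓ M₁ = ⊥`, then
`W ⊄ M₁`, since otherwise `F ⊓ M₂ ≤ F ⊓ W ≤ F ⊓ M₁ = ⊥`; yet `W ⊓ M₁ = E ⊓ M₁ ≠ ⊥`. A space of
dimension at most one meeting `M₁` nontrivially lies in `M₁`, so `dim W ≥ 2`. -/

namespace Submodule

variable {K V : Type*} [Field K] [AddCommGroup V] [Module K V]

theorem le_of_finrank_le_one_of_inf_ne_bot {W S : Submodule K V} [FiniteDimensional K W]
    (hW : Module.finrank K W ≤ 1) (hWS : W ⊓ S ≠ ⊥) : W ≤ S :=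
  inf_eq_left.mp <| eq_of_le_of_finrank_le inf_le_left <|
    hW.trans (one_le_finrank_iff.mpr hWS)

theorem two_le_finrank_of_inf_ne_bot_of_not_le {W S : Submodule K V} [FiniteDimensional K W]
    (hWS : W ⊓ S ≠ ⊥) (hW : ¬W ≤ S) : 2 ≤ Module.finrank K W := by
  by_contra! h
  exact hW (le_of_finrank_le_one_of_inf_ne_bot (by omega) hWS)

end Submodule

theorem schubert_divisor_product_flag_general
    {K V : Type*} [Field K] [AddCommGroup V] [Module K V]
    (n k : ℕ) (e : Module.Basis (Fin n) K V)
    (F E : Submodule K V) (hFE : F ≤ E)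
    (h1 : F ⊓ Submodule.span K (⇑e '' {j : Fin n | (j : ℕ) < n - k}) ≠ ⊥)
    (h2 : E ⊓ Submodule.span K (⇑e '' {j : Fin n | (j : ℕ) < n - k - 1}) ≠ ⊥) :
    F ⊓ Submodule.span K (⇑e '' {j : Fin n | (j : ℕ) < n - k - 1}) ≠ ⊥ ∨
    2 ≤ Module.finrank K
      ↥(E ⊓ Submodule.span K (⇑e '' {j : Fin n | (j : ℕ) < n - k})) := by
  have : FiniteDimensional K V := Module.Finite.of_basis e
  set M₁ := Submodule.span K (⇑e '' {j : Fin n | (j : ℕ) < n - k - 1})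
  set M₂ := Submodule.span K (⇑e '' {j : Fin n | (j : ℕ) < n - k})
  have hM : M₁ ≤ M₂ :=
    Submodule.span_mono <| Set.image_mono fun _ hj => hj.trans_le (Nat.sub_le _ _)
  refine or_iff_not_imp_left.mpr fun hF₁ => ?_
  refine Submodule.two_le_finrank_of_inf_ne_bot_of_not_le (S := M₁) ?_ fun hle => ?_
  · rwa [inf_assoc, inf_eq_right.mpr hM]
  · have hF₂ : F ⊓ M₂ ≤ F ⊓ M₁ := le_inf inf_le_left ((inf_le_inf_right _ hFE).trans hle)
    exact h1 (eq_bot_mono hF₂ (not_not.mp hF₁))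

theorem schubert_divisor_product_flag
    {K V : Type*} [Field K] [AddCommGroup V] [Module K V]
    (n k : ℕ) (hk : k + 1 ≤ n) (e : Module.Basis (Fin n) K V)
    (F E : Submodule K V) (hFE : F ≤ E)
    (hF : Module.finrank K F = k) (hE : Module.finrank K E = k + 1)
    (h1 : F ⊓ Submodule.span K (⇑e '' {j : Fin n | (j : ℕ) < n - k}) ≠ ⊥)
    (h2 : E ⊓ Submodule.span K (⇑e '' {j : Fin n | (j : ℕ) < n - k - 1}) ≠ ⊥) :
    F ⊓ Submodule.span K (⇑e '' {j : Fin n | (j : ℕ) < n - k - 1}) ≠ ⊥ ∨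
    2 ≤ Module.finrank K
      ↥(E ⊓ Submodule.span K (⇑e '' {j : Fin n | (j : ℕ) < n - k})) :=
  schubert_divisor_product_flag_general n k e F E hFE h1 h2
end

section
/- Let n ≥ 3 and let a_2,...,a_{n−1} be nonnegative integers. Define b_{2,1} = (a_2^2 + a_3^2 + ... + a_{n−1}^2) − (a_2a_3 + a_3a_4 + ... + a_{n−2}a_{n−1}) and b_{2,3} = (a_2a_3 + a_3a_4 + ... + a_{n−2}a_{n−1}) − (a_3^2 + ... + a_{n−1}^2). Suppose b_{2,1} ≥ 0, b_{2,3} ≥ 0, and b_{2,3}·a_2 ≥ b_{2,1}·a_2. Then a_i = 0 for all i with 2 ≤ i ≤ n − 1. -/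
/-!
With `Q = ∑_{i=2}^{n-2} (a_i - a_{i+1})² + a_{n-1}²` one has `b_{2,1} - b_{2,3} = Q ≥ 0` and
`b_{2,1} + b_{2,3} = a_2²`. If `a_2 > 0`, the last hypothesis says `Q ≤ 0`; if `a_2 = 0`, then
`Q = -2 b_{2,3} ≤ 0`. So `Q = 0`, which forces `a_{n-1} = 0` and all consecutive terms to agree.
-/

open Finset

theorem eq_of_forall_Ico_eq_succ {α : Type*} {a : ℕ → α} {k m : ℕ}
    (h : ∀ i ∈ Ico k m, a i = a (i + 1)) : ∀ i ∈ Icc k m, a i = a m := by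
  simp only [mem_Icc, and_imp]
  intro i hki him
  induction him using Nat.decreasingInduction with
  | self => rfl
  | of_succ j hjm ih => exact (h j (mem_Ico.mpr ⟨hki, hjm⟩)).trans (ih (by omega))

namespace Finset

section CommRing

variable {R : Type*} [CommRing R] (a : ℕ → R) {k m : ℕ}

theorem sum_Ico_sub_succ_sq_add_sq (hkm : k ≤ m) :
    ∑ i ∈ Ico k m, (a i - a (i + 1)) ^ 2 + a m ^ 2 =
      ∑ i ∈ Icc k m, a i ^ 2 + ∑ i ∈ Icc (k + 1) m, a i ^ 2 -
        2 * ∑ i ∈ Ico k m, a i * a (i + 1) := by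
  have hexpand : ∑ i ∈ Ico k m, (a i - a (i + 1)) ^ 2 =
      ∑ i ∈ Ico k m, a i ^ 2 + ∑ i ∈ Ico k m, a (i + 1) ^ 2 -
        2 * ∑ i ∈ Ico k m, a i * a (i + 1) := by
    rw [mul_sum, ← sum_add_distrib, ← sum_sub_distrib]
    exact sum_congr rfl fun i _ ↦ by ring
  rw [hexpand, ← Ico_add_one_right_eq_Icc, sum_Ico_succ_top hkm, ← Ico_add_one_right_eq_Icc,
    ← sum_Ico_add' (fun i ↦ a i ^ 2)]
  ring

theorem sum_Icc_sq_sub_sum_Icc_succ_sq (hkm : k ≤ m) :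
    ∑ i ∈ Icc k m, a i ^ 2 - ∑ i ∈ Icc (k + 1) m, a i ^ 2 = a k ^ 2 := by
  rw [← insert_Icc_add_one_left_eq_Icc hkm, sum_insert (by simp)]
  ring

end CommRing

theorem eq_zero_of_sum_Ico_sub_succ_sq_add_sq_eq_zero {R : Type*} [Ring R] [LinearOrder R]
    [IsStrictOrderedRing R] {a : ℕ → R} {k m : ℕ}
    (h : ∑ i ∈ Ico k m, (a i - a (i + 1)) ^ 2 + a m ^ 2 = 0) : ∀ i ∈ Icc k m, a i = 0 := by
  have hsum := sum_nonneg fun i (_ : i ∈ Ico k m) ↦ sq_nonneg (a i - a (i + 1))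
  obtain ⟨hdiff, hm⟩ := (add_eq_zero_iff_of_nonneg hsum (sq_nonneg _)).mp h
  have hstep : ∀ i ∈ Ico k m, a i = a (i + 1) := fun i hi ↦
    sub_eq_zero.mp <| pow_eq_zero_iff two_ne_zero |>.mp <|
      (sum_eq_zero_iff_of_nonneg fun j _ ↦ sq_nonneg _).mp hdiff i hi
  intro i hi
  rw [eq_of_forall_Ico_eq_succ hstep i hi, pow_eq_zero_iff two_ne_zero |>.mp hm]

end Finset

theorem no_nonconstant_map_P3_arithmetic_general (n : ℕ) (a : ℕ → ℤ)
    (ha : ∀ i ∈ Finset.Icc 2 (n - 1), 0 ≤ a i)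
    (hb23 : 0 ≤ (∑ i ∈ Finset.Icc 2 (n - 2), a i * a (i + 1)) -
      (∑ i ∈ Finset.Icc 3 (n - 1), a i ^ 2))
    (hc : ((∑ i ∈ Finset.Icc 2 (n - 2), a i * a (i + 1)) -
        (∑ i ∈ Finset.Icc 3 (n - 1), a i ^ 2)) * a 2 ≥
      ((∑ i ∈ Finset.Icc 2 (n - 1), a i ^ 2) -
        (∑ i ∈ Finset.Icc 2 (n - 2), a i * a (i + 1))) * a 2) :
    ∀ i ∈ Finset.Icc 2 (n - 1), a i = 0 := by
  intro i hi
  have hn : 2 ≤ n - 1 := (mem_Icc.mp hi).1.trans (mem_Icc.mp hi).2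
  have hIco : Icc 2 (n - 2) = Ico 2 (n - 1) := by
    ext j
    simp only [mem_Icc, mem_Ico]
    omega
  rw [hIco] at hb23 hc
  have hQ_eq := sum_Ico_sub_succ_sq_add_sq a hn
  have hQ_nonneg : 0 ≤ ∑ i ∈ Ico 2 (n - 1), (a i - a (i + 1)) ^ 2 + a (n - 1) ^ 2 :=
    add_nonneg (sum_nonneg fun i _ ↦ sq_nonneg _) (sq_nonneg _)
  have ha₂_sq := sum_Icc_sq_sub_sum_Icc_succ_sq a hn
  refine eq_zero_of_sum_Ico_sub_succ_sq_add_sq_eq_zero (le_antisymm ?_ hQ_nonneg) i hi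
  rcases (ha 2 (left_mem_Icc.mpr hn)).eq_or_lt with ha₂ | ha₂ <;> nlinarith

theorem no_nonconstant_map_P3_arithmetic (n : ℕ) (hn : 3 ≤ n) (a : ℕ → ℤ)
    (ha : ∀ i ∈ Finset.Icc 2 (n - 1), 0 ≤ a i)
    (hb21 : 0 ≤ (∑ i ∈ Finset.Icc 2 (n - 1), a i ^ 2) -
      (∑ i ∈ Finset.Icc 2 (n - 2), a i * a (i + 1)))
    (hb23 : 0 ≤ (∑ i ∈ Finset.Icc 2 (n - 2), a i * a (i + 1)) -
      (∑ i ∈ Finset.Icc 3 (n - 1), a i ^ 2))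
    (hc : ((∑ i ∈ Finset.Icc 2 (n - 2), a i * a (i + 1)) -
        (∑ i ∈ Finset.Icc 3 (n - 1), a i ^ 2)) * a 2 ≥
      ((∑ i ∈ Finset.Icc 2 (n - 1), a i ^ 2) -
        (∑ i ∈ Finset.Icc 2 (n - 2), a i * a (i + 1))) * a 2) :
    ∀ i ∈ Finset.Icc 2 (n - 1), a i = 0 :=
  no_nonconstant_map_P3_arithmetic_general n a ha hb23 hc
end
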